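/- Let Z and ν be orthogonal pure octonions. Then for every octonion Y, conj(Y·Z·ν) = Z·conj(Y·ν), where the products Y·Z·ν are associated as ((Y·Z)·ν) and the right side is Z·conj(Y·ν). -/

import Mathlib

/-- The octonions, built by the Cayley–Dickson construction on the quaternions. -/
def Oct : Type := Quaternion ℝ × Quaternion ℝ

noncomputable instance : AddCommGroup Oct := inferInstanceAs (AddCommGroup (Quaternion ℝ × Quaternion ℝ))
noncomputable instance : Module ℝ Oct := inferInstanceAs (Module ℝ (Quaternion ℝ × Quaternion ℝ))

namespace Oct

/-- Cayley–Dickson multiplication. -/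
noncomputable def mul (x y : Oct) : Oct :=
  (x.1 * y.1 - star y.2 * x.2, y.2 * x.1 + x.2 * star y.1)

/-- Octonion conjugation. -/
noncomputable def conj (x : Oct) : Oct := (star x.1, -x.2)

/-- Real part. -/
def re (x : Oct) : ℝ := x.1.re

/-- The standard inner product `⟨x, y⟩ = Re (x ⬝ conj y)`. -/
noncomputable def inner (x y : Oct) : ℝ := re (mul x (conj y))

/-- Squared norm. -/
noncomputable def normSq (x : Oct) : ℝ := inner x x

/-- A pure (purely imaginary) octonion is one with zero real part. -/
def IsPure (x : Oct) : Prop := re x = 0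

end Oct

/-!
Conjugation reverses products and negates pure octonions, so
`conj ((Y Z) ν) = ν (Z conj Y)` and `Z conj (Y ν) = -Z (ν conj Y)`. These agree because the
linearized left alternative law gives `ν (Z w) + Z (ν w) = (ν Z + Z ν) w`, and orthogonal pure
octonions anticommute.
-/

namespace Oct

open Quaternion

@[ext]
theorem ext {x y : Oct} (h₁ : x.1 = y.1) (h₂ : x.2 = y.2) : x = y := Prod.ext h₁ h₂

@[simp] theorem fst_zero : (0 : Oct).1 = 0 := rfl
@[simp] theorem snd_zero : (0 : Oct).2 = 0 := rfl
@[simp] theorem fst_neg (x : Oct) : (-x).1 = -x.1 := rfl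
@[simp] theorem snd_neg (x : Oct) : (-x).2 = -x.2 := rfl
@[simp] theorem fst_add (x y : Oct) : (x + y).1 = x.1 + y.1 := rfl
@[simp] theorem snd_add (x y : Oct) : (x + y).2 = x.2 + y.2 := rfl
@[simp] theorem fst_mul (x y : Oct) : (mul x y).1 = x.1 * y.1 - star y.2 * x.2 := rfl
@[simp] theorem snd_mul (x y : Oct) : (mul x y).2 = y.2 * x.1 + x.2 * star y.1 := rfl
@[simp] theorem fst_conj (x : Oct) : (conj x).1 = star x.1 := rfl
@[simp] theorem snd_conj (x : Oct) : (conj x).2 = -x.2 := rfl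

theorem neg_mul (x y : Oct) : mul (-x) y = -mul x y := by
  ext : 1 <;> simp only [fst_mul, snd_mul, fst_neg, snd_neg] <;> noncomm_ring

theorem mul_neg (x y : Oct) : mul x (-y) = -mul x y := by
  ext : 1 <;> simp only [fst_mul, snd_mul, fst_neg, snd_neg, star_neg] <;> noncomm_ring

theorem zero_mul (x : Oct) : mul 0 x = 0 := by
  ext : 1 <;> simp

theorem conj_mul (x y : Oct) : conj (mul x y) = mul (conj y) (conj x) := by
  ext : 1 <;>
    simp only [fst_mul, snd_mul, fst_conj, snd_conj, star_sub, star_mul, star_star, star_neg] <;>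
    noncomm_ring

theorem conj_eq_neg_of_isPure {x : Oct} (hx : IsPure x) : conj x = -x :=
  ext (star_eq_neg.2 hx) rfl

/-- The polarization of the left alternative law `x (x w) = (x x) w`. -/
theorem mul_mul_add_mul_mul (x y w : Oct) :
    mul x (mul y w) + mul y (mul x w) = mul (mul x y + mul y x) w := by
  ext : 1 <;> ext <;>
    simp only [fst_add, snd_add, fst_mul, snd_mul, re_add, re_sub, re_mul, re_star, imI_add,
      imI_sub, imI_mul, imI_star, imJ_add, imJ_sub, imJ_mul, imJ_star, imK_add, imK_sub, imK_mul,
      imK_star] <;>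
    ring

theorem mul_add_mul_swap_eq_zero {x y : Oct} (hx : IsPure x) (hy : IsPure y) (h : inner x y = 0) :
    mul x y + mul y x = 0 := by
  simp only [IsPure, re] at hx hy
  simp only [inner, re, fst_mul, snd_conj, fst_conj, re_sub, re_mul, re_star, imI_star, imJ_star,
    imK_star, imI_neg, imJ_neg, imK_neg, re_neg, hx, hy] at h
  ext : 1 <;> ext <;>
    simp only [fst_add, snd_add, fst_mul, snd_mul, fst_zero, snd_zero, re_add, re_sub, re_mul,
      re_star, imI_add, imI_sub, imI_mul, imI_star, imJ_add, imJ_sub, imJ_mul, imJ_star, imK_add,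
      imK_sub, imK_mul, imK_star, re_zero, imI_zero, imJ_zero, imK_zero, hx, hy]
  -- for pure `x, y` the real part of `x y + y x` is `-2 ⟨x, y⟩`, and every other part vanishes
  · linear_combination (-2) * h
  all_goals ring

end Oct

/-- For orthogonal pure octonions ,  and any octonion ,
. -/
theorem conj_mul_mul (Z ν : Oct) (hZ : Oct.IsPure Z) (hν : Oct.IsPure ν)
    (h : Oct.inner Z ν = 0) (Y : Oct) :
    Oct.conj (Oct.mul (Oct.mul Y Z) ν) = Oct.mul Z (Oct.conj (Oct.mul Y ν)) := by
  have hanti : Oct.mul ν (Oct.mul Z (Oct.conj Y)) + Oct.mul Z (Oct.mul ν (Oct.conj Y)) = 0 := by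
    rw [Oct.mul_mul_add_mul_mul, add_comm, Oct.mul_add_mul_swap_eq_zero hZ hν h, Oct.zero_mul]
  calc Oct.conj (Oct.mul (Oct.mul Y Z) ν)
      = Oct.mul ν (Oct.mul Z (Oct.conj Y)) := by
        rw [Oct.conj_mul, Oct.conj_mul, Oct.conj_eq_neg_of_isPure hZ,
          Oct.conj_eq_neg_of_isPure hν, Oct.neg_mul, Oct.neg_mul, Oct.mul_neg, neg_neg]
    _ = -Oct.mul Z (Oct.mul ν (Oct.conj Y)) := eq_neg_of_add_eq_zero_left hanti
    _ = Oct.mul Z (Oct.conj (Oct.mul Y ν)) := by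
        rw [Oct.conj_mul, Oct.conj_eq_neg_of_isPure hν, Oct.neg_mul, Oct.mul_neg]
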